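/- arXiv:2211.09870 — 2 statements merged into one kernel-verified Lean document; each statement's English description precedes it below -/
import Mathlib

section
/- Let t ≥ 1 be an integer and let G be a connected finite simple graph with 2 ≤ |V(G)| ≤ t+1. Then: (i) for every finite simple graph W with at least one vertex, t(K_{1,t}, W) ≥ t(G, W)^{t/(|V(G)|-1)}; and (ii) for every real c < t/(|V(G)|-1) there exists a finite simple graph W with t(G, W) > 0 and t(K_{1,t}, W) < t(G, W)^c. -/
/-- The homomorphism density `t(G, W)`. -/
noncomputable def homDensity {α β : Type} [Fintype α] [Fintype β]
    (G : SimpleGraph α) (W : SimpleGraph β) : ℝ :=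
  (Nat.card (G →g W) : ℝ) / (Fintype.card β : ℝ) ^ (Fintype.card α)

/-- The star `K_{1,t}` with `t` edges. -/
def starGraph (t : ℕ) : SimpleGraph (Fin 1 ⊕ Fin t) := completeBipartiteGraph (Fin 1) (Fin t)

/-!
For (i), a homomorphism from `G` is in particular one from a spanning tree `T` of `G`, which has
`k = |V(G)| - 1` edges. Root `T` and let `c_T(x)` count the homomorphisms sending the root to `x`.
Building `T` by grafting subtrees onto the root, Hölder's inequality (for the product at the root)
together with Jensen's inequality and a rearrangement inequality along the edges of `W` (for a
new edge at the root) give `∑ₓ c_T(x) ^ (s / k) ≤ ∑ₓ deg(x) ^ s` for every `s ≥ k`. With `s = t`,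
the power-mean inequality applied to `hom(T, W) = ∑ₓ c_T(x)` yields (i).

For (ii), take for `W` the disjoint union of `m` copies of the complete graph on `V(G)`. Then
`t(G, W) ≥ m / (m |V(G)|) ^ |V(G)|` while `t(K_{1,t}, W) < m ^ (-t)`, and since
`c (|V(G)| - 1) < t` the latter is below `t(G, W) ^ c` for large `m`.
-/

open Finset

section HomDensity

variable {α β γ : Type}

def starGraphHomEquiv (t : ℕ) (W : SimpleGraph β) :
    (starGraph t →g W) ≃ (x : β) × (Fin t → W.neighborSet x) where
  toFun f := ⟨f (.inl 0), fun j => ⟨f (.inr j), f.map_rel (by simp [starGraph])⟩⟩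
  invFun p := ⟨Sum.elim (fun _ => p.1) (fun j => p.2 j), by
    rintro (i | i) (j | j) h <;> simp [starGraph] at h ⊢
    exacts [(p.2 j).2, (p.2 i).2.symm]⟩
  left_inv f := by
    ext (i | j)
    · simp [Subsingleton.elim i 0]
    · rfl
  right_inv _ := rfl

theorem card_starGraph_hom [Fintype β] (t : ℕ) (W : SimpleGraph β) [DecidableRel W.Adj] :
    Nat.card (starGraph t →g W) = ∑ x, W.degree x ^ t := by
  rw [Nat.card_congr (starGraphHomEquiv t W), Nat.card_eq_fintype_card, Fintype.card_sigma]
  simp only [Fintype.card_fun, Fintype.card_fin, SimpleGraph.card_neighborSet_eq_degree]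

theorem homDensity_starGraph [Fintype β] (t : ℕ) (W : SimpleGraph β) [DecidableRel W.Adj] :
    homDensity (starGraph t) W =
      (∑ x, (W.degree x : ℝ) ^ t) / (Fintype.card β : ℝ) ^ (t + 1) := by
  simp [homDensity, card_starGraph_hom, add_comm]

theorem homDensity_starGraph_of_isRegularOfDegree [Fintype β] [Nonempty β] (t : ℕ)
    {W : SimpleGraph β} [DecidableRel W.Adj] {d : ℕ} (hW : W.IsRegularOfDegree d) :
    homDensity (starGraph t) W = ((d : ℝ) / Fintype.card β) ^ t := by
  have hβ : (Fintype.card β : ℝ) ≠ 0 := by positivity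
  simp only [homDensity_starGraph, hW.degree_eq, sum_const, card_univ, nsmul_eq_mul]
  rw [div_pow, pow_succ']
  field_simp

theorem homDensity_le_one [Fintype α] [Fintype β] (G : SimpleGraph α) (W : SimpleGraph β) :
    homDensity G W ≤ 1 := by
  refine div_le_one_of_le₀ ?_ (by positivity)
  calc (Nat.card (G →g W) : ℝ) ≤ Nat.card (α → β) := by
        exact_mod_cast Nat.card_le_card_of_injective _ DFunLike.coe_injective
    _ = _ := by
        rw [Nat.card_fun, Nat.card_eq_fintype_card, Nat.card_eq_fintype_card, Nat.cast_pow]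

theorem homDensity_congr_right [Fintype α] [Fintype β] [Fintype γ] (G : SimpleGraph α)
    {W : SimpleGraph β} {W' : SimpleGraph γ} (e : W ≃g W') :
    homDensity G W = homDensity G W' := by
  rw [homDensity, homDensity, Nat.card_congr (SimpleGraph.Iso.refl.homCongr e),
    Fintype.card_congr e.toEquiv]

end HomDensity

theorem Real.rpow_mul_rpow_add_rpow_mul_rpow_le {u w a b : ℝ} (hu : 0 ≤ u) (hw : 0 ≤ w)
    (ha : 0 ≤ a) (hb : 0 ≤ b) :
    u ^ a * w ^ b + w ^ a * u ^ b ≤ u ^ (a + b) + w ^ (a + b) := by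
  wlog huw : u ≤ w generalizing u w
  · linarith [this hw hu (le_of_not_ge huw)]
  have : 0 ≤ (w ^ a - u ^ a) * (w ^ b - u ^ b) :=
    mul_nonneg (sub_nonneg.2 (Real.rpow_le_rpow hu huw ha))
      (sub_nonneg.2 (Real.rpow_le_rpow hu huw hb))
  rw [Real.rpow_add_of_nonneg hu ha hb, Real.rpow_add_of_nonneg hw ha hb]
  linarith [mul_comm (u ^ a) (w ^ b)]

theorem Real.holderConjugate_add_div {a b : ℝ} (ha : 0 < a) (hb : 0 < b) :
    ((a + b) / a).HolderConjugate ((a + b) / b) := by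
  simpa only [inv_div] using Real.HolderConjugate.inv_inv (a := a / (a + b)) (b := b / (a + b))
    (by positivity) (by positivity) (by field_simp)

theorem Real.sum_mul_le_of_sum_rpow_le {ι : Type*} {s : Finset ι} {f g : ι → ℝ} {p q D : ℝ}
    (hpq : p.HolderConjugate q) (hf : ∀ i ∈ s, 0 ≤ f i) (hg : ∀ i ∈ s, 0 ≤ g i)
    (hfD : ∑ i ∈ s, f i ^ p ≤ D) (hgD : ∑ i ∈ s, g i ^ q ≤ D) :
    ∑ i ∈ s, f i * g i ≤ D := by
  have hf' : 0 ≤ ∑ i ∈ s, f i ^ p := sum_nonneg fun i hi => Real.rpow_nonneg (hf i hi) p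
  have hg' : 0 ≤ ∑ i ∈ s, g i ^ q := sum_nonneg fun i hi => Real.rpow_nonneg (hg i hi) q
  have hD : 0 ≤ D := hf'.trans hfD
  calc ∑ i ∈ s, f i * g i
      ≤ (∑ i ∈ s, f i ^ p) ^ (1 / p) * (∑ i ∈ s, g i ^ q) ^ (1 / q) :=
        Real.inner_le_Lp_mul_Lq_of_nonneg s hpq hf hg
    _ ≤ D ^ (1 / p) * D ^ (1 / q) := by
        gcongr
        exacts [hpq.one_div_nonneg, hpq.symm.one_div_nonneg]
    _ = D := by
        rw [← Real.rpow_add' hD (by simp [hpq.inv_add_inv_eq_one]), one_div, one_div,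
          hpq.inv_add_inv_eq_one, Real.rpow_one]

namespace SimpleGraph

variable {β : Type*} [Fintype β] (W : SimpleGraph β) [DecidableRel W.Adj]

theorem sum_sum_neighborFinset_comm {M : Type*} [AddCommMonoid M] (F : β → β → M) :
    ∑ x, ∑ y ∈ W.neighborFinset x, F x y = ∑ y, ∑ x ∈ W.neighborFinset y, F x y :=
  sum_comm' fun x y => by simp [W.adj_comm]

theorem rpow_sum_neighborFinset_le {p : ℝ} (hp : 1 ≤ p) {f : β → ℝ} (hf : ∀ y, 0 ≤ f y) (x : β) :
    (∑ y ∈ W.neighborFinset x, f y) ^ p ≤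
      (W.degree x : ℝ) ^ (p - 1) * ∑ y ∈ W.neighborFinset x, f y ^ p := by
  have := Real.rpow_sum_le_const_mul_sum_rpow_of_nonneg (W.neighborFinset x) hp fun y _ => hf y
  rwa [card_neighborFinset_eq_degree] at this

theorem sum_sum_neighborFinset_rpow_mul_rpow_le {a b : ℝ} (ha : 0 ≤ a) (hb : 0 ≤ b) :
    ∑ x, ∑ y ∈ W.neighborFinset x, (W.degree x : ℝ) ^ a * (W.degree y : ℝ) ^ b ≤
      ∑ x, (W.degree x : ℝ) ^ (a + b + 1) := by
  have hpair := sum_le_sum fun x (_ : x ∈ univ) =>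
    sum_le_sum fun y (_ : y ∈ W.neighborFinset x) => Real.rpow_mul_rpow_add_rpow_mul_rpow_le
      (W.degree x).cast_nonneg (W.degree y).cast_nonneg ha hb
  simp only [sum_add_distrib] at hpair
  have hdeg : ∑ x, ∑ _y ∈ W.neighborFinset x, (W.degree x : ℝ) ^ (a + b) =
      ∑ x, (W.degree x : ℝ) ^ (a + b + 1) := by
    refine sum_congr rfl fun x _ => ?_
    rw [sum_const, card_neighborFinset_eq_degree, nsmul_eq_mul,
      Real.rpow_add_one' (W.degree x).cast_nonneg (by positivity)]
    ring
  linarith [W.sum_sum_neighborFinset_comm fun x y => (W.degree y : ℝ) ^ a * (W.degree x : ℝ) ^ b,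
    W.sum_sum_neighborFinset_comm fun x (_ : β) => (W.degree x : ℝ) ^ (a + b)]

theorem sum_rpow_sum_neighborFinset_rpow_le {p r : ℝ} (hp : 1 ≤ p) (hr : 0 ≤ r) :
    ∑ y, (∑ x ∈ W.neighborFinset y, (W.degree x : ℝ) ^ r) ^ p ≤
      ∑ x, (W.degree x : ℝ) ^ (p * (r + 1)) := by
  calc ∑ y, (∑ x ∈ W.neighborFinset y, (W.degree x : ℝ) ^ r) ^ p
      ≤ ∑ y, (W.degree y : ℝ) ^ (p - 1) * ∑ x ∈ W.neighborFinset y, ((W.degree x : ℝ) ^ r) ^ p :=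
        sum_le_sum fun y _ =>
          W.rpow_sum_neighborFinset_le hp (fun x => Real.rpow_nonneg (W.degree x).cast_nonneg r) y
    _ = ∑ y, ∑ x ∈ W.neighborFinset y,
          (W.degree y : ℝ) ^ (p - 1) * (W.degree x : ℝ) ^ (r * p) := by
        simp only [mul_sum, ← Real.rpow_mul (Nat.cast_nonneg _)]
    _ ≤ ∑ x, (W.degree x : ℝ) ^ (p * (r + 1)) := by
        convert W.sum_sum_neighborFinset_rpow_mul_rpow_le (a := p - 1) (b := r * p)
          (by linarith) (by positivity) using 3
        ring

structure DegreeDominated (k : ℝ) (g : β → ℝ) : Prop where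
  nonneg : ∀ x, 0 ≤ g x
  sum_rpow_le : ∀ s, k ≤ s → ∑ x, g x ^ (s / k) ≤ ∑ x, (W.degree x : ℝ) ^ s

theorem degreeDominated_degree : W.DegreeDominated 1 fun x => W.degree x :=
  ⟨fun _ => Nat.cast_nonneg _, fun s _ => by simp⟩

namespace DegreeDominated

variable {W} {k k₁ k₂ : ℝ} {g g₁ g₂ : β → ℝ}

theorem sum_neighborFinset (hk : 0 < k) (hg : W.DegreeDominated k g) :
    W.DegreeDominated (k + 1) fun x => ∑ y ∈ W.neighborFinset x, g y := by
  refine ⟨fun x => sum_nonneg fun y _ => hg.nonneg y, fun s hs => ?_⟩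
  set q := s / (k + 1)
  have hq : 1 ≤ q := by rw [le_div_iff₀ (by linarith)]; linarith
  have hqs : q * (k + 1) = s := div_mul_cancel₀ s (by linarith)
  have hd : ∀ x, (0 : ℝ) ≤ W.degree x := fun x => Nat.cast_nonneg _
  have hm : ∀ y, 0 ≤ ∑ x ∈ W.neighborFinset y, (W.degree x : ℝ) ^ (q - 1) :=
    fun y => sum_nonneg fun x _ => Real.rpow_nonneg (hd x) _
  calc ∑ x, (∑ y ∈ W.neighborFinset x, g y) ^ q
      ≤ ∑ x, (W.degree x : ℝ) ^ (q - 1) * ∑ y ∈ W.neighborFinset x, g y ^ q :=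
        sum_le_sum fun x _ => W.rpow_sum_neighborFinset_le hq hg.nonneg x
    _ = ∑ y, g y ^ q * ∑ x ∈ W.neighborFinset y, (W.degree x : ℝ) ^ (q - 1) := by
        simp only [mul_sum]
        rw [W.sum_sum_neighborFinset_comm]
        simp only [mul_comm]
    _ ≤ ∑ x, (W.degree x : ℝ) ^ s := by
        refine Real.sum_mul_le_of_sum_rpow_le (Real.holderConjugate_add_div hk one_pos)
          (fun y _ => Real.rpow_nonneg (hg.nonneg y) q) (fun y _ => hm y) ?_ ?_
        · convert hg.sum_rpow_le s (by linarith) using 2 with y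
          rw [← Real.rpow_mul (hg.nonneg y), ← mul_div_assoc, hqs]
        · convert W.sum_rpow_sum_neighborFinset_rpow_le (p := k + 1) (r := q - 1) (by linarith)
            (by linarith) using 3
          · rw [div_one]
          · linear_combination -hqs

theorem mul (hk₁ : 0 < k₁) (hk₂ : 0 < k₂) (hg₁ : W.DegreeDominated k₁ g₁)
    (hg₂ : W.DegreeDominated k₂ g₂) : W.DegreeDominated (k₁ + k₂) (g₁ * g₂) := by
  refine ⟨fun x => mul_nonneg (hg₁.nonneg x) (hg₂.nonneg x), fun s hs => ?_⟩
  have hpow (g : β → ℝ) (hg : ∀ x, 0 ≤ g x) (k : ℝ) (hk : 0 < k) (x : β) :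
      (g x ^ (s / (k₁ + k₂))) ^ ((k₁ + k₂) / k) = g x ^ (s / k) := by
    rw [← Real.rpow_mul (hg x)]
    field_simp
  simp only [Pi.mul_apply, Real.mul_rpow (hg₁.nonneg _) (hg₂.nonneg _)]
  refine Real.sum_mul_le_of_sum_rpow_le (Real.holderConjugate_add_div hk₁ hk₂)
    (fun x _ => Real.rpow_nonneg (hg₁.nonneg x) _) (fun x _ => Real.rpow_nonneg (hg₂.nonneg x) _)
    ?_ ?_
  · simpa only [hpow g₁ hg₁.nonneg k₁ hk₁] using hg₁.sum_rpow_le s (by linarith)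
  · simpa only [hpow g₂ hg₂.nonneg k₂ hk₂] using hg₂.sum_rpow_le s (by linarith)

theorem rpow_sum_le (hk : 0 < k) (hg : W.DegreeDominated k g) {t : ℝ} (hkt : k ≤ t) :
    (∑ x, g x) ^ (t / k) ≤ (Fintype.card β : ℝ) ^ (t / k - 1) * ∑ x, (W.degree x : ℝ) ^ t :=
  calc (∑ x, g x) ^ (t / k) ≤ (Fintype.card β : ℝ) ^ (t / k - 1) * ∑ x, g x ^ (t / k) := by
        simpa using Real.rpow_sum_le_const_mul_sum_rpow_of_nonneg univ
          ((one_le_div hk).2 hkt) fun x _ => hg.nonneg x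
    _ ≤ _ := mul_le_mul_of_nonneg_left (hg.sum_rpow_le t hkt) (by positivity)

end DegreeDominated

end SimpleGraph

/-- `graft T S` joins the root of `S` to the root of `T` by a new edge and keeps the root of `T`;
every finite rooted tree arises this way from single vertices. -/
inductive LabelledTree (α : Type*)
  | leaf (a : α)
  | graft (T S : LabelledTree α)

namespace LabelledTree

variable {α β : Type*}

def root : LabelledTree α → α
  | leaf a => a
  | graft T _ => T.root

def labels : LabelledTree α → List α
  | leaf a => [a]
  | graft T S => T.labels ++ S.labels

def edges : LabelledTree α → ℕ
  | leaf _ => 0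
  | graft T S => T.edges + S.edges + 1

def map (f : α → β) : LabelledTree α → LabelledTree β
  | leaf a => leaf (f a)
  | graft T S => graft (T.map f) (S.map f)

def IsSubgraphOf (G : SimpleGraph α) : LabelledTree α → Prop
  | leaf _ => True
  | graft T S => T.IsSubgraphOf G ∧ S.IsSubgraphOf G ∧ G.Adj T.root S.root

theorem root_mem_labels : ∀ T : LabelledTree α, T.root ∈ T.labels
  | leaf _ => List.mem_singleton_self _
  | graft T _ => List.mem_append_left _ T.root_mem_labels

theorem length_labels : ∀ T : LabelledTree α, T.labels.length = T.edges + 1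
  | leaf _ => rfl
  | graft T S => by
    simp only [labels, edges, List.length_append, T.length_labels, S.length_labels]
    ring

theorem labels_map (f : α → β) : ∀ T : LabelledTree α, (T.map f).labels = T.labels.map f
  | leaf _ => rfl
  | graft T S => by simp [map, labels, labels_map f T, labels_map f S]

theorem root_map (f : α → β) : ∀ T : LabelledTree α, (T.map f).root = f T.root
  | leaf _ => rfl
  | graft T _ => root_map f T

theorem map_injective_of_forall_mem {T : LabelledTree α} (hT : ∀ a, a ∈ T.labels) :
    Function.Injective fun f : α → β => T.map f := fun f g hfg =>
  funext fun a => List.map_inj_left.1 (by simpa [labels_map] using congrArg labels hfg) a (hT a)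

section Spanning

variable [DecidableEq α] {G : SimpleGraph α}

def attach (a b : α) : LabelledTree α → LabelledTree α
  | leaf c => if c = a then graft (leaf c) (leaf b) else leaf c
  | graft T S => if a ∈ T.labels then graft (T.attach a b) S else graft T (S.attach a b)

theorem root_attach (a b : α) : ∀ T : LabelledTree α, (T.attach a b).root = T.root
  | leaf c => by unfold attach; split_ifs <;> rfl
  | graft T S => by unfold attach; split_ifs <;> simp [root, root_attach a b T]

theorem labels_attach_perm {a : α} (b : α) :
    ∀ {T : LabelledTree α}, a ∈ T.labels → (T.attach a b).labels.Perm (b :: T.labels)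
  | leaf c, h => by
    obtain rfl : a = c := List.mem_singleton.1 h
    simpa [attach, labels] using List.Perm.swap b a []
  | graft T S, h => by
    unfold attach
    split_ifs with hT
    · exact (labels_attach_perm b hT).append_right S.labels
    · have hS : a ∈ S.labels := by simpa [labels, hT] using h
      exact ((labels_attach_perm b hS).append_left T.labels).trans List.perm_middle

theorem IsSubgraphOf.attach {a b : α} (hab : G.Adj a b) :
    ∀ {T : LabelledTree α}, T.IsSubgraphOf G → (T.attach a b).IsSubgraphOf G
  | leaf c, _ => by
    unfold LabelledTree.attach
    split_ifs with hc
    · exact ⟨trivial, trivial, hc ▸ hab⟩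
    · trivial
  | graft T S, ⟨hT, hS, hTS⟩ => by
    unfold LabelledTree.attach
    split_ifs
    · exact ⟨hT.attach hab, hS, by rwa [root_attach]⟩
    · exact ⟨hT, hS.attach hab, by rwa [root_attach]⟩

end Spanning

theorem exists_spanning [Fintype α] {G : SimpleGraph α} (hG : G.Connected) :
    ∃ T : LabelledTree α,
      T.IsSubgraphOf G ∧ (∀ a, a ∈ T.labels) ∧ T.edges + 1 = Fintype.card α := by
  classical
  obtain ⟨a₀⟩ := hG.nonempty
  suffices h : ∀ n (T : LabelledTree α), T.IsSubgraphOf G → T.labels.Nodup →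
      Fintype.card α - T.labels.length = n → ∃ T' : LabelledTree α,
        T'.IsSubgraphOf G ∧ (∀ a, a ∈ T'.labels) ∧ T'.edges + 1 = Fintype.card α from
    h _ (leaf a₀) trivial (List.nodup_singleton a₀) rfl
  intro n
  induction n with
  | zero =>
    intro T hT hnd hn
    refine ⟨T, hT, fun a => by_contra fun ha => ?_, ?_⟩
    · have := (List.nodup_cons.2 ⟨ha, hnd⟩).length_le_card
      simp only [List.length_cons] at this
      omega
    · have := hnd.length_le_card
      rw [← T.length_labels]
      omega
  | succ n ih =>
    intro T hT hnd hn
    obtain ⟨w, hw⟩ : ∃ w, w ∉ T.labels := by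
      by_contra! hcov
      have := Finset.card_le_card fun a (_ : a ∈ Finset.univ) => List.mem_toFinset.2 (hcov a)
      rw [Finset.card_univ, List.toFinset_card_of_nodup hnd] at this
      omega
    obtain ⟨p⟩ := hG.preconnected T.root w
    obtain ⟨d, -, hd₁, hd₂⟩ := p.exists_boundary_dart {a | a ∈ T.labels} T.root_mem_labels hw
    have hperm := labels_attach_perm d.snd hd₁
    exact ih (T.attach d.fst d.snd) (hT.attach d.adj)
      (hperm.nodup_iff.2 (List.nodup_cons.2 ⟨hd₂, hnd⟩))
      (by rw [hperm.length_eq, List.length_cons]; omega)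

section Counting

variable [Fintype β] (W : SimpleGraph β) [DecidableRel W.Adj]

/-- For `T` with distinct labels, `T.homCount W x` is the number of homomorphisms from `T` to `W`
sending the root to `x`. -/
def homCount : LabelledTree α → β → ℕ
  | leaf _, _ => 1
  | graft T S, x => T.homCount x * ∑ y ∈ W.neighborFinset x, S.homCount y

def homImages : LabelledTree α → β → Multiset (LabelledTree β)
  | leaf _, x => {leaf x}
  | graft T S, x => (W.neighborFinset x).val.bind fun y =>
      (T.homImages x ×ˢ S.homImages y).map fun U => graft U.1 U.2

theorem card_homImages : ∀ (T : LabelledTree α) (x : β),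
    Multiset.card (T.homImages W x) = T.homCount W x
  | leaf _, _ => rfl
  | graft T S, x => by
    simp only [homImages, homCount, Multiset.card_bind, Function.comp_def, Multiset.card_map,
      Multiset.card_product, card_homImages T, card_homImages S, Finset.mul_sum]
    rfl

theorem map_mem_homImages {G : SimpleGraph α} (φ : G →g W) :
    ∀ {T : LabelledTree α}, T.IsSubgraphOf G → T.map φ ∈ T.homImages W (φ T.root)
  | leaf _, _ => Multiset.mem_singleton_self _
  | graft T S, ⟨hT, hS, hTS⟩ => by
    simp only [homImages, map, root, Multiset.mem_bind, Multiset.mem_map, Multiset.mem_product]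
    exact ⟨φ S.root, (W.mem_neighborFinset _ _).2 (φ.map_rel hTS),
      (T.map φ, S.map φ), ⟨map_mem_homImages φ hT, map_mem_homImages φ hS⟩, rfl⟩

theorem card_hom_le_sum_homCount [Fintype α] {G : SimpleGraph α} {T : LabelledTree α}
    (hT : T.IsSubgraphOf G) (hcov : ∀ a, a ∈ T.labels) :
    Nat.card (G →g W) ≤ ∑ x, T.homCount W x := by
  classical
  let M := Finset.univ.val.bind (T.homImages W)
  have hmem (φ : G →g W) : T.map φ ∈ M.toFinset :=
    Multiset.mem_toFinset.2 (Multiset.mem_bind.2 ⟨_, Finset.mem_univ _, map_mem_homImages W φ hT⟩)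
  calc Nat.card (G →g W) ≤ Nat.card M.toFinset :=
        Nat.card_le_card_of_injective (fun φ => ⟨T.map φ, hmem φ⟩) fun φ ψ h =>
          DFunLike.coe_injective (map_injective_of_forall_mem hcov (congrArg Subtype.val h))
    _ ≤ Multiset.card M := by
        rw [Nat.card_eq_fintype_card, Fintype.card_coe]
        exact Multiset.toFinset_card_le M
    _ = ∑ x, T.homCount W x := by
        simp only [M, Multiset.card_bind, Function.comp_def, card_homImages]
        rfl

theorem degreeDominated_homCount :
    ∀ {T : LabelledTree α}, 0 < T.edges → W.DegreeDominated T.edges fun x => T.homCount W x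
  | leaf _, h => absurd h (lt_irrefl 0)
  | graft T S, _ => by
    have hS : W.DegreeDominated (S.edges + 1 : ℕ)
        fun x => ∑ y ∈ W.neighborFinset x, (S.homCount W y : ℝ) := by
      rcases S with _ | ⟨S₁, S₂⟩
      · simpa [edges, homCount] using W.degreeDominated_degree
      · have hpos : 0 < (graft S₁ S₂).edges := Nat.succ_pos _
        push_cast
        exact (degreeDominated_homCount hpos).sum_neighborFinset (Nat.cast_pos.2 hpos)
    rcases T with _ | ⟨T₁, T₂⟩
    · simpa [edges, homCount] using hS
    · have hpos : 0 < (graft T₁ T₂).edges := Nat.succ_pos _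
      have := (degreeDominated_homCount hpos).mul (Nat.cast_pos.2 hpos) (by positivity) hS
      convert this using 1
      · push_cast [edges]
        ring
      · funext x; simp [homCount]

end Counting

end LabelledTree

theorem card_hom_rpow_le_of_connected {α β : Type} [Fintype α] [Fintype β] {G : SimpleGraph α}
    (hG : G.Connected) {t : ℕ} (hα : 2 ≤ Fintype.card α) (hαt : Fintype.card α ≤ t + 1)
    (W : SimpleGraph β) [DecidableRel W.Adj] :
    (Nat.card (G →g W) : ℝ) ^ ((t : ℝ) / ((Fintype.card α : ℝ) - 1)) ≤
      (Fintype.card β : ℝ) ^ ((t : ℝ) / ((Fintype.card α : ℝ) - 1) - 1) *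
        ∑ x, (W.degree x : ℝ) ^ (t : ℝ) := by
  obtain ⟨T, hT, hcov, hedges⟩ := LabelledTree.exists_spanning hG
  have hedges' : (T.edges : ℝ) = (Fintype.card α : ℝ) - 1 := by
    rw [← hedges]
    push_cast
    ring
  have hk : (0 : ℝ) < Fintype.card α - 1 := by
    have : (2 : ℝ) ≤ Fintype.card α := by exact_mod_cast hα
    linarith
  have hkt : (Fintype.card α : ℝ) - 1 ≤ t := by
    have : (Fintype.card α : ℝ) ≤ t + 1 := by exact_mod_cast hαt
    linarith
  have hdom := LabelledTree.degreeDominated_homCount W (T := T) (by omega)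
  rw [hedges'] at hdom
  have hcount : (Nat.card (G →g W) : ℝ) ≤ ∑ x, (T.homCount W x : ℝ) := by
    exact_mod_cast LabelledTree.card_hom_le_sum_homCount W hT hcov
  exact (Real.rpow_le_rpow (by positivity) hcount (by positivity)).trans (hdom.rpow_sum_le hk hkt)

theorem homDensity_rpow_le_homDensity_starGraph {α β : Type} [Fintype α] [Fintype β]
    [Nonempty β] {G : SimpleGraph α} (hG : G.Connected) {t : ℕ} (hα : 2 ≤ Fintype.card α)
    (hαt : Fintype.card α ≤ t + 1) (W : SimpleGraph β) :
    homDensity G W ^ ((t : ℝ) / ((Fintype.card α : ℝ) - 1)) ≤ homDensity (starGraph t) W := by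
  classical
  set k : ℝ := (Fintype.card α : ℝ) - 1
  have hk : k ≠ 0 := by
    have : (2 : ℝ) ≤ Fintype.card α := by exact_mod_cast hα
    simp only [k]
    linarith
  set n : ℝ := (Fintype.card β : ℝ)
  have hn : 0 < n := by positivity
  calc homDensity G W ^ (t / k)
      = (Nat.card (G →g W) : ℝ) ^ (t / k) / n ^ ((k + 1) * (t / k)) := by
        rw [homDensity, Real.div_rpow (by positivity) (by positivity), ← Real.rpow_natCast,
          ← Real.rpow_mul hn.le, sub_add_cancel]
    _ ≤ n ^ (t / k - 1) * (∑ x, (W.degree x : ℝ) ^ (t : ℝ)) / n ^ ((k + 1) * (t / k)) := by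
        gcongr
        exact card_hom_rpow_le_of_connected hG hα hαt W
    _ = (∑ x, (W.degree x : ℝ) ^ t) / n ^ (t + 1) := by
        rw [show (k + 1) * (t / k) = (t / k - 1) + (t + 1) by field_simp; ring, Real.rpow_add hn,
          mul_div_mul_left _ _ (by positivity)]
        norm_cast
    _ = homDensity (starGraph t) W := (homDensity_starGraph t W).symm

section BlowUp

variable {α : Type} [Fintype α] (m : ℕ)

theorem card_le_card_hom_bot_boxProd_top [Nonempty α] (G : SimpleGraph α) :
    m ≤ Nat.card (G →g (⊥ : SimpleGraph (Fin m)) □ (⊤ : SimpleGraph α)) := by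
  obtain ⟨a⟩ := ‹Nonempty α›
  let φ (i : Fin m) : G →g (⊥ : SimpleGraph (Fin m)) □ (⊤ : SimpleGraph α) :=
    (SimpleGraph.boxProdRight _ _ i).toHom.comp (SimpleGraph.Hom.ofLE le_top)
  simpa using Nat.card_le_card_of_injective φ fun i j h =>
    congrArg Prod.fst (DFunLike.congr_fun h a)

theorem div_pow_le_homDensity_bot_boxProd_top [Nonempty α] (G : SimpleGraph α) :
    (m : ℝ) / (m * Fintype.card α) ^ Fintype.card α ≤
      homDensity G ((⊥ : SimpleGraph (Fin m)) □ (⊤ : SimpleGraph α)) := by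
  rw [homDensity, Fintype.card_prod, Fintype.card_fin]
  push_cast
  gcongr
  exact_mod_cast card_le_card_hom_bot_boxProd_top m G

theorem homDensity_starGraph_bot_boxProd_top_lt [Nonempty α] {t : ℕ} (ht : t ≠ 0) (hm : 0 < m) :
    homDensity (starGraph t) ((⊥ : SimpleGraph (Fin m)) □ (⊤ : SimpleGraph α)) <
      ((m : ℝ)⁻¹) ^ t := by
  classical
  have : Nonempty (Fin m) := ⟨⟨0, hm⟩⟩
  rw [homDensity_starGraph_of_isRegularOfDegree t (d := Fintype.card α - 1) fun x => by
      rw [SimpleGraph.degree_boxProd, SimpleGraph.bot_degree, SimpleGraph.complete_graph_degree,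
        zero_add],
    Fintype.card_prod, Fintype.card_fin]
  gcongr
  rw [div_lt_iff₀ (by positivity), Nat.cast_mul, inv_mul_cancel_left₀ (by positivity)]
  exact_mod_cast Nat.sub_lt Fintype.card_pos one_pos

end BlowUp

theorem inv_pow_le_div_mul_pow_rpow {m v t : ℕ} {c : ℝ} (hm : 0 < m) (hv : 0 < v)
    (h : ((v : ℝ) ^ v) ^ c ≤ (m : ℝ) ^ ((t : ℝ) - (v - 1) * c)) :
    ((m : ℝ)⁻¹) ^ t ≤ ((m : ℝ) / (m * v) ^ v) ^ c := by
  have hm' : (0 : ℝ) < m := by exact_mod_cast hm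
  have hsplit : (m : ℝ) / (m * v) ^ v = ((m : ℝ) ^ ((v : ℝ) - 1) * (v : ℝ) ^ v)⁻¹ := by
    rw [Real.rpow_sub_one hm'.ne', Real.rpow_natCast, mul_pow]
    field_simp
  rw [hsplit, Real.inv_rpow (by positivity), Real.mul_rpow (by positivity) (by positivity),
    ← Real.rpow_mul hm'.le, inv_pow]
  refine inv_anti₀ (by positivity) ?_
  calc (m : ℝ) ^ (((v : ℝ) - 1) * c) * ((v : ℝ) ^ v) ^ c
      ≤ (m : ℝ) ^ (((v : ℝ) - 1) * c) * (m : ℝ) ^ ((t : ℝ) - (v - 1) * c) := by gcongr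
    _ = (m : ℝ) ^ t := by rw [← Real.rpow_add hm', add_sub_cancel, Real.rpow_natCast]

theorem exists_homDensity_starGraph_lt_rpow {α : Type} [Fintype α] (G : SimpleGraph α) {t : ℕ}
    (ht : 1 ≤ t) (hα : 2 ≤ Fintype.card α) {c : ℝ}
    (hc : c < t / ((Fintype.card α : ℝ) - 1)) :
    ∃ (m : ℕ) (W : SimpleGraph (Fin m)), 0 < m ∧ 0 < homDensity G W ∧
      homDensity (starGraph t) W < homDensity G W ^ c := by
  set v := Fintype.card α
  have : Nonempty α := Fintype.card_pos_iff.1 (by omega)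
  have hv : (0 : ℝ) < v - 1 := by
    have : (2 : ℝ) ≤ v := by exact_mod_cast hα
    linarith
  -- `homDensity G W ≤ 1`, so it suffices to treat a nonnegative exponent `c' ≥ c`
  obtain ⟨c', hcc', hc't, hc'⟩ : ∃ c', c ≤ c' ∧ c' < t / ((v : ℝ) - 1) ∧ 0 ≤ c' :=
    ⟨max c 0, le_max_left _ _, max_lt hc (div_pos (by exact_mod_cast ht) hv), le_max_right _ _⟩
  have hε : 0 < (t : ℝ) - (v - 1) * c' := by
    rw [lt_div_iff₀ hv] at hc't
    linarith
  obtain ⟨m, hm, hmε⟩ : ∃ m : ℕ, 0 < m ∧ ((v : ℝ) ^ v) ^ c' ≤ (m : ℝ) ^ ((t : ℝ) - (v - 1) * c') :=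
    ((Filter.eventually_gt_atTop 0).and (((tendsto_rpow_atTop hε).comp
      tendsto_natCast_atTop_atTop).eventually_ge_atTop _)).exists
  have : NeZero m := ⟨hm.ne'⟩
  let W := (⊥ : SimpleGraph (Fin m)) □ (⊤ : SimpleGraph α)
  let e := SimpleGraph.Iso.map (Fintype.equivFin (Fin m × α)) W
  refine ⟨Fintype.card (Fin m × α), W.map (Fintype.equivFin (Fin m × α)), Fintype.card_pos, ?_⟩
  rw [← homDensity_congr_right G e, ← homDensity_congr_right (starGraph t) e]
  have hlow := div_pow_le_homDensity_bot_boxProd_top m G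
  have hpos : 0 < homDensity G W := lt_of_lt_of_le (by positivity) hlow
  refine ⟨hpos, (homDensity_starGraph_bot_boxProd_top_lt m (by omega) hm).trans_le ?_⟩
  calc ((m : ℝ)⁻¹) ^ t ≤ ((m : ℝ) / (m * v) ^ v) ^ c' :=
        inv_pow_le_div_mul_pow_rpow hm Fintype.card_pos hmε
    _ ≤ homDensity G W ^ c' := Real.rpow_le_rpow (by positivity) hlow hc'
    _ ≤ homDensity G W ^ c := Real.rpow_le_rpow_of_exponent_ge hpos (homDensity_le_one G W) hcc'

theorem stmt_3 {α : Type} [Fintype α] (t : ℕ) (ht : 1 ≤ t)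
    (G : SimpleGraph α) (hconn : G.Connected)
    (hcard : 2 ≤ Fintype.card α) (hcard' : Fintype.card α ≤ t + 1) :
    (∀ (β : Type) [Fintype β] [Nonempty β] (W : SimpleGraph β),
      homDensity (starGraph t) W ≥
        homDensity G W ^ ((t : ℝ) / ((Fintype.card α : ℝ) - 1))) ∧
    (∀ c : ℝ, c < (t : ℝ) / ((Fintype.card α : ℝ) - 1) →
      ∃ (m : ℕ) (W : SimpleGraph (Fin m)), 0 < m ∧
        0 < homDensity G W ∧
        homDensity (starGraph t) W < homDensity G W ^ c) :=
  ⟨fun _ _ _ W => homDensity_rpow_le_homDensity_starGraph hconn hcard hcard' W,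
    fun _ hc => exists_homDensity_starGraph_lt_rpow G ht hcard hc⟩
end

section
/- Let n < m be positive integers with n even. Then: (i) for every finite simple graph W with at least one vertex, t(P_n, W) ≥ t(P_m, W)^{(n+1)/(m+1)}; and (ii) for every real c < (n+1)/(m+1) there exists a finite simple graph W with t(P_m, W) > 0 and t(P_n, W) < t(P_m, W)^c. (That is, ρ(P_m, P_n) = (n+1)/(m+1) when n < m and n is even.) -/
/-!
Write `w k = 𝟙ᵀ Aᵏ 𝟙 = hom(P_k, W)` for the adjacency matrix `A` of `W`, and let `ρ = ‖A‖` (the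
ℓ²-operator norm, which for the symmetric `A` is the largest `|μ|` over eigenvalues `μ`).
For `n = 2r` we have `w n = ‖Aʳ 𝟙‖²`, hence `w m = ⟪Aʳ 𝟙, Aᵐ⁻ⁿ Aʳ 𝟙⟫ ≤ ρᵐ⁻ⁿ w n`. Conversely,
take an eigenvector `v` for the eigenvalue `±ρ`: as `A ≥ 0`, `Aᵏ |v| ≥ ρᵏ |v|` entrywise, and as
`A ≤ 1`, `ρ ‖v‖² ≤ (𝟙ᵀ |v|)²`; Cauchy–Schwarz for `⟪Aʳ 𝟙, |v|⟫` then gives `ρⁿ⁺¹ ≤ w n`. Together,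
`(w m)ⁿ⁺¹ ≤ ρ⁽ᵐ⁻ⁿ⁾⁽ⁿ⁺¹⁾ (w n)ⁿ⁺¹ ≤ (w n)ᵐ⁺¹`, which is (i) once both sides are normalised.

For (ii), a single edge on `N` vertices has `t(P_k, W) = 2 / Nᵏ⁺¹` for `k ≥ 1`, and
`2 / Nⁿ⁺¹ < (2 / Nᵐ⁺¹)ᶜ` as soon as `N ^ (n + 1 - c (m + 1)) > 2 ^ (1 - c)`.
-/

open Filter Matrix
open scoped RealInnerProductSpace

/-- `P n` is the path with `n` edges (on `n + 1` vertices). -/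
def pathN (n : ℕ) : SimpleGraph (Fin (n + 1)) := SimpleGraph.pathGraph (n + 1)

theorem LinearMap.IsSymmetric.norm_mem_spectrum_or_neg_norm_mem_spectrum {𝕜 E : Type*}
    [RCLike 𝕜] [NormedAddCommGroup E] [InnerProductSpace 𝕜 E] [Nontrivial E]
    {T : E →L[𝕜] E} (hT : (T : E →ₗ[𝕜] E).IsSymmetric) :
    algebraMap ℝ 𝕜 ‖T‖ ∈ spectrum 𝕜 T ∨ -algebraMap ℝ 𝕜 ‖T‖ ∈ spectrum 𝕜 T := by
  by_contra! h
  obtain ⟨c, hc0, hc⟩ := T.abs_rayleighQuotient_le_of_norm_mem_resolventSet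
    (Set.notMem_compl_iff.mp h.1) (Set.notMem_compl_iff.mp h.2)
  grind [ciSup_le hc, T.norm_eq_iSup_rayleighQuotient hT]

theorem ContinuousLinearMap.norm_pow_apply_le {𝕜 E : Type*} [NontriviallyNormedField 𝕜]
    [SeminormedAddCommGroup E] [NormedSpace 𝕜 E] (T : E →L[𝕜] E) (k : ℕ) (x : E) :
    ‖(T ^ k) x‖ ≤ ‖T‖ ^ k * ‖x‖ := by
  induction k with
  | zero => simp
  | succ k ih =>
    rw [pow_succ', mul_apply_eq_comp, pow_succ', mul_assoc]
    exact (T.le_opNorm _).trans (by gcongr)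

theorem LinearMap.IsSymmetric.inner_pow_add_le {E : Type*} [NormedAddCommGroup E]
    [InnerProductSpace ℝ E] {T : E →L[ℝ] E}
    (hT : (T : E →ₗ[ℝ] E).IsSymmetric) (x : E) (r k : ℕ) :
    ⟪x, (T ^ (2 * r + k)) x⟫ ≤ ‖T‖ ^ k * ⟪x, (T ^ (2 * r)) x⟫ := by
  have hsplit (j : ℕ) : ⟪x, (T ^ (2 * r + j)) x⟫ = ⟪(T ^ r) x, (T ^ j) ((T ^ r) x)⟫ := by
    have hsymm := hT.pow r x ((T ^ j) ((T ^ r) x))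
    rw [← ContinuousLinearMap.toLinearMap_pow, ContinuousLinearMap.coe_coe] at hsymm
    rw [hsymm, ← mul_apply_eq_comp, ← mul_apply_eq_comp, ← pow_add, ← pow_add]
    ring_nf
  have hsq : ⟪x, (T ^ (2 * r)) x⟫ = ‖(T ^ r) x‖ ^ 2 := by
    rw [← add_zero (2 * r), hsplit, pow_zero, one_apply_eq_self, real_inner_self_eq_norm_sq]
  rw [hsplit, hsq]
  calc ⟪(T ^ r) x, (T ^ k) ((T ^ r) x)⟫ ≤ ‖(T ^ r) x‖ * ‖(T ^ k) ((T ^ r) x)‖ :=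
        real_inner_le_norm _ _
    _ ≤ ‖(T ^ r) x‖ * (‖T‖ ^ k * ‖(T ^ r) x‖) := by gcongr; exact T.norm_pow_apply_le k _
    _ = ‖T‖ ^ k * ‖(T ^ r) x‖ ^ 2 := by ring

namespace Matrix

section CommSemiring
variable {β R : Type*} [Fintype β] [DecidableEq β] [CommSemiring R]

theorem sum_mul_prod_adjacent (A : Matrix β β R) (x : β → R) (k : ℕ) :
    ∑ f : Fin (k + 1) → β, x (f 0) * ∏ i : Fin k, A (f i.castSucc) (f i.succ) =
      x ⬝ᵥ (A ^ k *ᵥ 1) := by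
  induction k generalizing x with
  | zero => simp [dotProduct, ← (Equiv.funUnique (Fin 1) β).symm.sum_comp]
  | succ k ih =>
    rw [← (Fin.consEquiv fun _ => β).sum_comp, Fintype.sum_prod_type, Finset.sum_comm,
      pow_succ', ← mulVec_mulVec, dotProduct_mulVec, ← ih]
    refine Finset.sum_congr rfl fun g _ => ?_
    simp only [Fin.consEquiv_apply, Fin.prod_univ_succ, Fin.cons_zero, vecMul, dotProduct,
      Finset.sum_mul]
    refine Finset.sum_congr rfl fun a _ => ?_
    simp [mul_assoc]

theorem pow_mulVec_of_mulVec_eq_smul {A : Matrix β β R} {μ : R} {v : β → R}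
    (hv : A *ᵥ v = μ • v) (k : ℕ) : A ^ k *ᵥ v = μ ^ k • v := by
  induction k with
  | zero => simp
  | succ k ih => rw [pow_succ, ← mulVec_mulVec, hv, mulVec_smul, ih, smul_smul, pow_succ']

omit [DecidableEq β] in
theorem IsSymm.dotProduct_mulVec_comm {M : Matrix β β R} (hM : M.IsSymm) (x y : β → R) :
    x ⬝ᵥ (M *ᵥ y) = (M *ᵥ x) ⬝ᵥ y := by
  rw [dotProduct_mulVec, ← mulVec_transpose, hM.eq]

end CommSemiring

section LinearOrderedCommRing
variable {α β R : Type*} [Fintype β] [CommRing R] [LinearOrder R] [IsStrictOrderedRing R]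

theorem dotProduct_sq_le (x y : β → R) : (x ⬝ᵥ y) ^ 2 ≤ (x ⬝ᵥ x) * (y ⬝ᵥ y) := by
  simpa only [dotProduct, sq] using Finset.sum_mul_sq_le_sq_mul_sq Finset.univ x y

theorem abs_mulVec_le_mulVec_abs {B : Matrix α β R} (hB : ∀ i j, 0 ≤ B i j) (v : β → R) :
    |B *ᵥ v| ≤ B *ᵥ |v| := fun i => by
  simp only [Pi.abs_apply, mulVec, dotProduct]
  refine (Finset.abs_sum_le_sum_abs _ _).trans_eq (Finset.sum_congr rfl fun j _ => ?_)
  rw [abs_mul, abs_of_nonneg (hB i j)]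

end LinearOrderedCommRing

variable {β : Type*} [Fintype β] [DecidableEq β]

theorem IsHermitian.dotProduct_pow_add_mulVec_le {A : Matrix β β ℝ} (hA : A.IsHermitian)
    (x : β → ℝ) (r k : ℕ) :
    x ⬝ᵥ (A ^ (2 * r + k) *ᵥ x) ≤
      ‖toEuclideanCLM (𝕜 := ℝ) A‖ ^ k * x ⬝ᵥ (A ^ (2 * r) *ᵥ x) := by
  have hinner (j : ℕ) : x ⬝ᵥ (A ^ j *ᵥ x) =
      ⟪WithLp.toLp 2 x, (toEuclideanCLM (𝕜 := ℝ) A ^ j) (WithLp.toLp 2 x)⟫ := by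
    rw [← map_pow, inner_toEuclideanCLM]
  rw [hinner, hinner]
  exact LinearMap.IsSymmetric.inner_pow_add_le (isSymmetric_toEuclideanLin_iff.mpr hA) _ r k

theorem IsHermitian.exists_abs_eq_norm_and_mulVec_eq_smul [Nonempty β] {A : Matrix β β ℝ}
    (hA : A.IsHermitian) :
    ∃ μ : ℝ, |μ| = ‖toEuclideanCLM (𝕜 := ℝ) A‖ ∧ ∃ v ≠ 0, A *ᵥ v = μ • v := by
  have hspec (μ : ℝ) (hμ : μ ∈ spectrum ℝ (toEuclideanCLM (𝕜 := ℝ) A)) :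
      ∃ v ≠ 0, A *ᵥ v = μ • v := by
    rw [AlgEquiv.spectrum_eq (toEuclideanCLM (𝕜 := ℝ) (n := β)) A, ← spectrum_toLin',
      ← Module.End.hasEigenvalue_iff_mem_spectrum] at hμ
    obtain ⟨v, hv⟩ := hμ.exists_hasEigenvector
    exact ⟨v, hv.2, by simpa [toLin'_apply] using hv.apply_eq_smul⟩
  rcases LinearMap.IsSymmetric.norm_mem_spectrum_or_neg_norm_mem_spectrum
    (T := toEuclideanCLM (𝕜 := ℝ) A) (isSymmetric_toEuclideanLin_iff.mpr hA) with h | h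
  · exact ⟨_, abs_norm _, hspec _ h⟩
  · exact ⟨_, by simp, hspec _ h⟩

section Nonneg
variable {A : Matrix β β ℝ} (h0 : ∀ i j, 0 ≤ A i j) {μ : ℝ} {v : β → ℝ} (hv : A *ᵥ v = μ • v)
include h0 hv

theorem abs_pow_smul_abs_le_pow_mulVec_abs (k : ℕ) : |μ| ^ k • |v| ≤ A ^ k *ᵥ |v| := by
  calc |μ| ^ k • |v| = |A ^ k *ᵥ v| := by
        ext i
        simp [pow_mulVec_of_mulVec_eq_smul hv, abs_mul]
    _ ≤ A ^ k *ᵥ |v| := abs_mulVec_le_mulVec_abs (pow_apply_nonneg h0 k) v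

theorem abs_mul_dotProduct_abs_le (h1 : ∀ i j, A i j ≤ 1) :
    |μ| * (|v| ⬝ᵥ |v|) ≤ (1 ⬝ᵥ |v|) ^ 2 := by
  have hrow (i : β) : |μ| * |v| i ≤ 1 ⬝ᵥ |v| := calc
    |μ| * |v| i = (|μ| ^ 1 • |v|) i := by simp
    _ ≤ (A ^ 1 *ᵥ |v|) i := abs_pow_smul_abs_le_pow_mulVec_abs h0 hv 1 i
    _ ≤ 1 ⬝ᵥ |v| := by
        rw [pow_one, mulVec, dotProduct, dotProduct]
        gcongr with j
        · exact abs_nonneg (v j)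
        · simpa using h1 i j
  calc |μ| * (|v| ⬝ᵥ |v|) = ∑ i, |v| i * (|μ| * |v| i) := by
        rw [dotProduct, Finset.mul_sum]; congr! 1 with i; ring
    _ ≤ ∑ i, |v| i * (1 ⬝ᵥ |v|) := by
        gcongr with i
        · exact abs_nonneg (v i)
        · exact hrow i
    _ = (1 ⬝ᵥ |v|) ^ 2 := by rw [← Finset.sum_mul, sq]; simp [dotProduct]

theorem abs_pow_succ_le_one_dotProduct_pow_mulVec_one (hA : A.IsSymm) (h1 : ∀ i j, A i j ≤ 1)
    (hv0 : v ≠ 0) (r : ℕ) : |μ| ^ (2 * r + 1) ≤ 1 ⬝ᵥ (A ^ (2 * r) *ᵥ 1) := by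
  set w := A ^ r *ᵥ 1
  have hww : 1 ⬝ᵥ (A ^ (2 * r) *ᵥ 1) = w ⬝ᵥ w := by
    rw [two_mul, pow_add, ← mulVec_mulVec, (hA.pow r).dotProduct_mulVec_comm]
  have hwu : |μ| ^ r * (1 ⬝ᵥ |v|) ≤ w ⬝ᵥ |v| := by
    rw [← (hA.pow r).dotProduct_mulVec_comm, ← smul_eq_mul, ← dotProduct_smul]
    exact dotProduct_le_dotProduct_of_nonneg_left
      (abs_pow_smul_abs_le_pow_mulVec_abs h0 hv r) (fun _ => zero_le_one)
  have hq : 0 < |v| ⬝ᵥ |v| := by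
    refine (dotProduct_nonneg_of_nonneg (abs_nonneg v) (abs_nonneg v)).lt_of_ne' fun h => hv0 ?_
    rw [← dotProduct_self_eq_zero, ← h]
    simp [dotProduct]
  rw [hww]
  refine le_of_mul_le_mul_right ?_ hq
  calc |μ| ^ (2 * r + 1) * (|v| ⬝ᵥ |v|) = (|μ| ^ r) ^ 2 * (|μ| * (|v| ⬝ᵥ |v|)) := by ring
    _ ≤ (|μ| ^ r) ^ 2 * (1 ⬝ᵥ |v|) ^ 2 := by gcongr; exact abs_mul_dotProduct_abs_le h0 hv h1
    _ = (|μ| ^ r * (1 ⬝ᵥ |v|)) ^ 2 := by ring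
    _ ≤ (w ⬝ᵥ |v|) ^ 2 := pow_le_pow_left₀ (mul_nonneg (by positivity)
          (dotProduct_nonneg_of_nonneg (fun _ => zero_le_one) (abs_nonneg v))) hwu 2
    _ ≤ (w ⬝ᵥ w) * (|v| ⬝ᵥ |v|) := dotProduct_sq_le w |v|

end Nonneg

theorem one_dotProduct_pow_mulVec_one_pow_le [Nonempty β] {A : Matrix β β ℝ} (hA : A.IsSymm)
    (h0 : ∀ i j, 0 ≤ A i j) (h1 : ∀ i j, A i j ≤ 1) {n m : ℕ} (hn : Even n) (hnm : n ≤ m) :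
    (1 ⬝ᵥ (A ^ m *ᵥ 1)) ^ (n + 1) ≤ (1 ⬝ᵥ (A ^ n *ᵥ 1)) ^ (m + 1) := by
  obtain ⟨r, rfl⟩ : ∃ r, n = 2 * r := hn.exists_two_nsmul n
  obtain ⟨k, rfl⟩ := Nat.exists_eq_add_of_le hnm
  have hA' : A.IsHermitian := isHermitian_iff_isSymm.mpr hA
  obtain ⟨μ, hμ, v, hv0, hv⟩ := hA'.exists_abs_eq_norm_and_mulVec_eq_smul
  set ρ := ‖toEuclideanCLM (𝕜 := ℝ) A‖
  have hupper : 1 ⬝ᵥ (A ^ (2 * r + k) *ᵥ 1) ≤ ρ ^ k * 1 ⬝ᵥ (A ^ (2 * r) *ᵥ 1) :=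
    hA'.dotProduct_pow_add_mulVec_le 1 r k
  have hlower : ρ ^ (2 * r + 1) ≤ 1 ⬝ᵥ (A ^ (2 * r) *ᵥ 1) :=
    hμ ▸ abs_pow_succ_le_one_dotProduct_pow_mulVec_one h0 hv hA h1 hv0 r
  have hwalk (j : ℕ) : 0 ≤ 1 ⬝ᵥ (A ^ j *ᵥ 1) :=
    dotProduct_nonneg_of_nonneg (fun _ => zero_le_one)
      (fun i => Finset.sum_nonneg fun l _ => mul_nonneg (pow_apply_nonneg h0 j i l) zero_le_one)
  calc (1 ⬝ᵥ (A ^ (2 * r + k) *ᵥ 1)) ^ (2 * r + 1)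
      ≤ (ρ ^ k * 1 ⬝ᵥ (A ^ (2 * r) *ᵥ 1)) ^ (2 * r + 1) := pow_le_pow_left₀ (hwalk _) hupper _
    _ = (ρ ^ (2 * r + 1)) ^ k * (1 ⬝ᵥ (A ^ (2 * r) *ᵥ 1)) ^ (2 * r + 1) := by ring
    _ ≤ (1 ⬝ᵥ (A ^ (2 * r) *ᵥ 1)) ^ k * (1 ⬝ᵥ (A ^ (2 * r) *ᵥ 1)) ^ (2 * r + 1) := by
        have := hwalk (2 * r)
        gcongr
    _ = (1 ⬝ᵥ (A ^ (2 * r) *ᵥ 1)) ^ (2 * r + k + 1) := by ring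

end Matrix

namespace SimpleGraph
variable {β : Type*}

def pathGraphHomEquiv (W : SimpleGraph β) (k : ℕ) :
    (pathGraph (k + 1) →g W) ≃
      {f : Fin (k + 1) → β // ∀ i : Fin k, W.Adj (f i.castSucc) (f i.succ)} where
  toFun φ := ⟨φ, fun i => φ.map_adj (by simp [pathGraph_adj])⟩
  invFun f := ⟨f, fun {u v} h => by
    rcases pathGraph_adj.mp h with h | h
    · obtain ⟨i, rfl, rfl⟩ : ∃ i : Fin k, i.castSucc = u ∧ i.succ = v :=
        ⟨⟨u, by omega⟩, rfl, Fin.ext h⟩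
      exact f.2 i
    · obtain ⟨i, rfl, rfl⟩ : ∃ i : Fin k, i.castSucc = v ∧ i.succ = u :=
        ⟨⟨v, by omega⟩, rfl, Fin.ext h⟩
      exact (f.2 i).symm⟩
  left_inv _ := rfl
  right_inv _ := rfl

variable [Fintype β] [DecidableEq β] (W : SimpleGraph β) [DecidableRel W.Adj]

theorem card_pathGraph_hom (R : Type*) [CommSemiring R] (k : ℕ) :
    (Nat.card (pathGraph (k + 1) →g W) : R) = 1 ⬝ᵥ (W.adjMatrix R ^ k *ᵥ 1) := by
  rw [Nat.card_congr (pathGraphHomEquiv W k), Nat.card_eq_fintype_card, Fintype.card_subtype,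
    Finset.card_filter, ← Matrix.sum_mul_prod_adjacent]
  push_cast
  refine Finset.sum_congr rfl fun f _ => ?_
  simp [adjMatrix_apply, Fintype.prod_boole]

theorem one_dotProduct_adjMatrix_pow_succ_mulVec_one_of_degree_le_one (R : Type*) [CommSemiring R]
    (h : ∀ v, W.degree v ≤ 1) (k : ℕ) :
    1 ⬝ᵥ (W.adjMatrix R ^ (k + 1) *ᵥ 1) = ∑ v, (W.degree v : R) := by
  set d : β → R := fun v => W.degree v
  have hd1 : W.adjMatrix R *ᵥ 1 = d := by
    ext v; simp [d, adjMatrix_mulVec_apply]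
  have hdd : W.adjMatrix R *ᵥ d = (1 : R) • d := by
    ext v
    rw [adjMatrix_mulVec_apply, one_smul]
    calc ∑ u ∈ W.neighborFinset v, d u = ∑ u ∈ W.neighborFinset v, 1 := by
          refine Finset.sum_congr rfl fun u hu => ?_
          have hu1 : W.degree u = 1 := le_antisymm (h u)
            (W.degree_pos_iff_exists_adj u |>.mpr ⟨v, ((W.mem_neighborFinset v u).mp hu).symm⟩)
          simp [d, hu1]
      _ = d v := by simp [d]
  rw [pow_succ, ← Matrix.mulVec_mulVec, hd1, Matrix.pow_mulVec_of_mulVec_eq_smul hdd, one_pow,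
    one_smul]
  simp only [d, dotProduct, Pi.one_apply, one_mul]

omit [Fintype β] [DecidableEq β] in
theorem card_edgeFinset_edge {s t : β} (h : s ≠ t) [Fintype (edge s t).edgeSet] :
    (edge s t).edgeFinset.card = 1 :=
  Finset.card_eq_one.mpr ⟨s(s, t), by ext e; simp [edgeSet_edge_of_ne h]⟩

end SimpleGraph

theorem eventually_div_pow_lt_rpow_div_pow {a c : ℝ} (ha : 0 < a) {p q : ℕ} (hc : c * q < p) :
    ∀ᶠ N : ℝ in atTop, a / N ^ p < (a / N ^ q) ^ c := by
  filter_upwards [eventually_gt_atTop 0,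
    (tendsto_rpow_atTop (sub_pos.2 hc)).eventually_gt_atTop (a ^ (1 - c))] with N hN hNe
  rw [Real.div_rpow ha.le (by positivity), ← Real.rpow_natCast N q, ← Real.rpow_mul hN.le,
    div_lt_div_iff₀ (by positivity) (by positivity)]
  calc a * N ^ (q * c) = a ^ c * a ^ (1 - c) * N ^ (q * c) := by
        rw [← Real.rpow_add ha]; simp
    _ < a ^ c * N ^ (p - c * q) * N ^ (q * c) := by gcongr
    _ = a ^ c * N ^ p := by
        rw [mul_assoc, ← Real.rpow_add hN, ← Real.rpow_natCast N p]; ring_nf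

theorem rpow_div_le_of_pow_le {a b : ℝ} (ha : 0 ≤ a) (hb : 0 ≤ b) {p q : ℕ} (hq : q ≠ 0)
    (h : a ^ p ≤ b ^ q) : a ^ ((p : ℝ) / q) ≤ b := by
  rw [div_eq_mul_inv, Real.rpow_natCast_mul ha, ← Real.pow_rpow_inv_natCast hb hq]
  exact Real.rpow_le_rpow (by positivity) h (by positivity)

section homDensity
variable {β : Type} [Fintype β]

theorem homDensity_nonneg {α : Type} [Fintype α] (G : SimpleGraph α) (W : SimpleGraph β) :
    0 ≤ homDensity G W := by
  unfold homDensity; positivity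

theorem homDensity_pathN [DecidableEq β] (W : SimpleGraph β) [DecidableRel W.Adj] (k : ℕ) :
    homDensity (pathN k) W =
      1 ⬝ᵥ (W.adjMatrix ℝ ^ k *ᵥ 1) / (Fintype.card β : ℝ) ^ (k + 1) := by
  rw [homDensity, pathN, W.card_pathGraph_hom ℝ, Fintype.card_fin]

theorem homDensity_pathN_pow_le [Nonempty β] (W : SimpleGraph β) {n m : ℕ} (hn : Even n)
    (hnm : n ≤ m) : homDensity (pathN m) W ^ (n + 1) ≤ homDensity (pathN n) W ^ (m + 1) := by
  classical
  rw [homDensity_pathN, homDensity_pathN, div_pow, div_pow, ← pow_mul, ← pow_mul,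
    mul_comm (m + 1)]
  gcongr
  refine one_dotProduct_pow_mulVec_one_pow_le W.isSymm_adjMatrix (fun i j => ?_) (fun i j => ?_)
    hn hnm <;> by_cases h : W.Adj i j <;> simp [h]

theorem homDensity_pathN_edge {K k : ℕ} (hk : 0 < k) :
    homDensity (pathN k) (SimpleGraph.edge (0 : Fin (K + 2)) 1) = 2 / ((K : ℝ) + 2) ^ (k + 1) := by
  have h01 : (0 : Fin (K + 2)) ≠ 1 := by simp
  have hdeg (v : Fin (K + 2)) : (SimpleGraph.edge (0 : Fin (K + 2)) 1).degree v ≤ 1 :=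
    (SimpleGraph.degree_le_card_edgeFinset _ v).trans_eq (SimpleGraph.card_edgeFinset_edge h01)
  have hsum : ∑ v, ((SimpleGraph.edge (0 : Fin (K + 2)) 1).degree v : ℝ) = 2 := by
    rw [← Nat.cast_sum, SimpleGraph.sum_degrees_eq_twice_card_edges]
    norm_num
    convert SimpleGraph.card_edgeFinset_edge h01
  obtain ⟨k, rfl⟩ : ∃ j, k = j + 1 := ⟨k - 1, by omega⟩
  rw [homDensity_pathN,
    SimpleGraph.one_dotProduct_adjMatrix_pow_succ_mulVec_one_of_degree_le_one _ ℝ hdeg, hsum]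
  simp

end homDensity

theorem stmt_6 (m n : ℕ) (hn : 0 < n) (hnm : n < m) (hne : Even n) :
    (∀ (β : Type) [Fintype β] [Nonempty β] (W : SimpleGraph β),
      homDensity (pathN n) W ≥
        homDensity (pathN m) W ^ (((n : ℝ) + 1) / ((m : ℝ) + 1))) ∧
    (∀ c : ℝ, c < ((n : ℝ) + 1) / ((m : ℝ) + 1) →
      ∃ (N : ℕ) (W : SimpleGraph (Fin N)), 0 < N ∧
        0 < homDensity (pathN m) W ∧
        homDensity (pathN n) W < homDensity (pathN m) W ^ c) := by
  constructor
  · intro β _ _ W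
    exact_mod_cast rpow_div_le_of_pow_le (homDensity_nonneg _ _) (homDensity_nonneg _ _)
      m.succ_ne_zero (homDensity_pathN_pow_le W hne hnm.le)
  · intro c hc
    have hc' : c * ((m + 1 : ℕ) : ℝ) < ((n + 1 : ℕ) : ℝ) := by
      push_cast
      rwa [lt_div_iff₀ (by positivity)] at hc
    obtain ⟨K, hK⟩ := eventually_atTop.mp
      (tendsto_natCast_atTop_atTop.eventually (eventually_div_pow_lt_rpow_div_pow two_pos hc'))
    refine ⟨K + 2, SimpleGraph.edge 0 1, by omega, ?_, ?_⟩
    · rw [homDensity_pathN_edge (by omega)]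
      positivity
    · rw [homDensity_pathN_edge hn, homDensity_pathN_edge (by omega)]
      simpa using hK (K + 2) (by omega)
end
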